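/- Let G=(V,E) be a mixed graph and A, B disjoint subsets of V. The following are equivalent: (i) A and B are m-separated given V\(A∪B); (ii) A and B are not connected by any pure-collider path; (iii) district(A ∪ ch(A)) ∩ district(B ∪ ch(B)) = ∅. -/

import Mathlib

structure MixedGraph (V : Type*) where
  dir : V → V → Prop
  bi : V → V → Prop
  bi_symm : ∀ {a b : V}, bi a b → bi b a

namespace MixedGraph

variable {V : Type*}

/-- A single edge traversal: a directed edge traversed forwards (`a → b`),
a directed edge traversed backwards (`a ← b`), or a bi-directed edge (`a ↔ b`). -/
inductive Step (G : MixedGraph V) : V → V → Type _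
  | fwd {a b : V} : G.dir a b → G.Step a b
  | bwd {a b : V} : G.dir b a → G.Step a b
  | bi  {a b : V} : G.bi a b → G.Step a b

/-- The edge has an arrowhead at its second endpoint. -/
def Step.arrowAtEnd {G : MixedGraph V} : {a b : V} → G.Step a b → Prop
  | _, _, .fwd _ => True
  | _, _, .bwd _ => False
  | _, _, .bi _ => True

/-- The edge has an arrowhead at its first endpoint. -/
def Step.arrowAtStart {G : MixedGraph V} : {a b : V} → G.Step a b → Prop
  | _, _, .fwd _ => False
  | _, _, .bwd _ => True
  | _, _, .bi _ => True

/-- Paths (possibly self-intersecting) in a mixed graph. -/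
inductive Walk (G : MixedGraph V) : V → V → Type _
  | nil {a : V} : G.Walk a a
  | cons {a b c : V} : G.Step a b → G.Walk b c → G.Walk a c

namespace Walk

variable {G : MixedGraph V}

def length : {a b : V} → G.Walk a b → ℕ
  | _, _, .nil => 0
  | _, _, .cons _ w => w.length + 1

def verts : {a b : V} → G.Walk a b → List V
  | a, _, .nil => [a]
  | a, _, .cons _ w => a :: w.verts

/-- The intermediate vertices of a walk. -/
def interm {a b : V} (w : G.Walk a b) : List V := w.verts.tail.dropLast

def append : {a b c : V} → G.Walk a b → G.Walk b c → G.Walk a c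
  | _, _, _, .nil, w' => w'
  | _, _, _, .cons s w, w' => .cons s (w.append w')

/-- Every intermediate vertex of the walk is a collider. -/
def IsPureCollider : {a b : V} → G.Walk a b → Prop
  | _, _, .nil => True
  | _, _, .cons _ .nil => True
  | _, _, .cons s (.cons t w) =>
      s.arrowAtEnd ∧ t.arrowAtStart ∧ (Walk.cons t w).IsPureCollider

/-- The walk is m-connecting given `C`: every non-collider on it is outside `C`
and every collider on it is in `C`. -/
def IsMConnecting (C : Set V) : {a b : V} → G.Walk a b → Prop
  | _, _, .nil => True
  | _, _, .cons _ .nil => True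
  | _, _, .cons (b := m) s (.cons t w) =>
      ((s.arrowAtEnd ∧ t.arrowAtStart) ↔ m ∈ C) ∧ (Walk.cons t w).IsMConnecting C

end Walk

variable (G : MixedGraph V)

/-- `A` and `B` are m-separated given `C`: no m-connecting walk given `C`
between a vertex of `A` and a vertex of `B`. -/
def MSep (A B C : Set V) : Prop :=
  ∀ a ∈ A, ∀ b ∈ B, ∀ w : G.Walk a b, ¬ w.IsMConnecting C

/-- `u` and `v` are joined by a pure-collider path (with at least one edge). -/
def ColliderConn (u v : V) : Prop :=
  ∃ w : G.Walk u v, 0 < w.length ∧ w.IsPureCollider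

/-- Vertices connected to `S` by a (possibly empty) path of bi-directed edges. -/
def district (S : Set V) : Set V :=
  {v | ∃ s ∈ S, Relation.ReflTransGen G.bi s v}

/-- Children of vertices in `S`. -/
def ch (S : Set V) : Set V := {v | ∃ a ∈ S, G.dir a v}

/-- Ancestors of `S` (including `S` itself). -/
def an (S : Set V) : Set V :=
  {v | ∃ s ∈ S, Relation.ReflTransGen G.dir v s}

/-- The subgraph induced by `W`: edges with both endpoints in `W`. -/
def induce (W : Set V) : MixedGraph V where
  dir a b := G.dir a b ∧ a ∈ W ∧ b ∈ W
  bi a b := G.bi a b ∧ a ∈ W ∧ b ∈ W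
  bi_symm h := ⟨G.bi_symm h.1, h.2.2, h.2.1⟩

/-- Separation in an undirected graph with adjacency `adj`: every path between
`A` and `B` intersects `C`, i.e. `B` is not reachable from `A` avoiding `C`. -/
def UndirSep (adj : V → V → Prop) (A B C : Set V) : Prop :=
  ∀ a ∈ A, ∀ b ∈ B, ¬ Relation.ReflTransGen (fun x y => adj x y ∧ y ∉ C) a b

inductive EdgeKind | fwd | bwd | bi
deriving DecidableEq

def Step.kind {G : MixedGraph V} : {a b : V} → G.Step a b → EdgeKind
  | _, _, .fwd _ => .fwd
  | _, _, .bwd _ => .bwd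
  | _, _, .bi _ => .bi

def Walk.kinds {G : MixedGraph V} : {a b : V} → G.Walk a b → List EdgeKind
  | _, _, .nil => []
  | _, _, .cons s w => s.kind :: w.kinds

end MixedGraph

/-!
Write `D_S` for `district (S ∪ ch S)`. Along a walk from `A` to `B` whose intermediate vertices
outside `A ∪ B` are colliders (an m-connecting walk given `(A ∪ B)ᶜ`, or a pure-collider walk),
every vertex entered through an arrowhead stays in `D_A`, and the argument restarts whenever the
walk meets `A`; so the first vertex of `B` (or the tail of the edge `x ← b` reaching it) lies in
`D_A ∩ D_B`. Conversely, a vertex of `D_A ∩ D_B` gives a bi-directed chain `u ↔ ⋯ ↔ v` with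
`u ∈ A ∪ ch A` and `v ∈ B ∪ ch B`; extended by `a → u` and `v ← b` where needed and cut at its
last visit to `A` and first visit to `B`, it is a pure-collider walk that is also m-connecting
given `(A ∪ B)ᶜ`.
-/

namespace MixedGraph

variable {V : Type*} {G : MixedGraph V}

namespace Walk

def arrowAtStart : {a b : V} → G.Walk a b → Prop
  | _, _, .nil => True
  | _, _, .cons s _ => s.arrowAtStart

variable {C S : Set V}

theorem isMConnecting_univ_iff {a b : V} (w : G.Walk a b) :
    w.IsMConnecting Set.univ ↔ w.IsPureCollider := by
  induction w with
  | nil => exact Iff.rfl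
  | cons s w ih =>
    cases w with
    | nil => exact Iff.rfl
    | cons t w => simp only [IsMConnecting, IsPureCollider, Set.mem_univ, iff_true, ih, and_assoc]

theorem IsMConnecting.tail {a b c : V} {s : G.Step a b} {w : G.Walk b c}
    (h : (Walk.cons s w).IsMConnecting C) : w.IsMConnecting C := by
  cases w with
  | nil => trivial
  | cons t w => exact h.2

theorem IsMConnecting.cons {a b c : V} {s : G.Step a b} {w : G.Walk b c}
    (hs : s.arrowAtEnd) (hw : w.arrowAtStart) (hb : b ∈ C) (h : w.IsMConnecting C) :
    (Walk.cons s w).IsMConnecting C := by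
  cases w with
  | nil => trivial
  | cons t w => exact ⟨iff_of_true ⟨hs, hw⟩ hb, h⟩

theorem IsPureCollider.cons {a b c : V} {s : G.Step a b} {w : G.Walk b c}
    (hs : s.arrowAtEnd) (hw : w.arrowAtStart) (h : w.IsPureCollider) :
    (Walk.cons s w).IsPureCollider := by
  rw [← isMConnecting_univ_iff] at h ⊢
  exact h.cons hs hw (Set.mem_univ b)

theorem IsMConnecting.mem_or_collider {a b c : V} {s : G.Step a b} {w : G.Walk b c}
    (h : (Walk.cons s w).IsMConnecting C) (hC : Sᶜ ⊆ C) (hc : c ∈ S) :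
    b ∈ S ∨ s.arrowAtEnd ∧ w.arrowAtStart := by
  cases w with
  | nil => exact Or.inl hc
  | cons t w => exact or_iff_not_imp_left.2 fun hb => h.1.2 (hC hb)

end Walk

theorem subset_district (S : Set V) : S ⊆ G.district S :=
  fun x hx => ⟨x, hx, .refl⟩

theorem mem_district_of_bi {S : Set V} {x y : V} (hx : x ∈ G.district S) (hxy : G.bi x y) :
    y ∈ G.district S := by
  obtain ⟨s, hs, hsx⟩ := hx
  exact ⟨s, hs, hsx.tail hxy⟩

section DistrictMeet

variable {A B : Set V}

theorem mem_district_of_step {x y : V} (s : G.Step x y) (hx : x ∈ G.district (A ∪ G.ch A))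
    (hstart : x ∈ A ∨ s.arrowAtStart) (hend : s.arrowAtEnd) :
    y ∈ G.district (A ∪ G.ch A) := by
  cases s with
  | fwd hxy =>
    have hxA : x ∈ A := hstart.resolve_right id
    exact subset_district _ (Or.inr ⟨x, hxA, hxy⟩)
  | bwd _ => exact hend.elim
  | bi hxy => exact mem_district_of_bi hx hxy

theorem district_inter_nonempty_of_step {x y : V} (s : G.Step x y)
    (hx : x ∈ G.district (A ∪ G.ch A)) (hstart : x ∈ A ∨ s.arrowAtStart) (hy : y ∈ B) :
    (G.district (A ∪ G.ch A) ∩ G.district (B ∪ G.ch B)).Nonempty := by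
  by_cases hend : s.arrowAtEnd
  · exact ⟨y, mem_district_of_step s hx hstart hend, subset_district _ (Or.inl hy)⟩
  · cases s with
    | bwd hyx => exact ⟨x, hx, subset_district _ (Or.inr ⟨y, hy, hyx⟩)⟩
    | fwd _ => exact (hend trivial).elim
    | bi _ => exact (hend trivial).elim

theorem district_inter_nonempty_of_walk {C : Set V} (hC : (A ∪ B)ᶜ ⊆ C) {x b : V}
    (w : G.Walk x b) (hw : w.IsMConnecting C) (hb : b ∈ B) (hx : x ∈ G.district (A ∪ G.ch A))
    (hstart : x ∈ A ∨ w.arrowAtStart) :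
    (G.district (A ∪ G.ch A) ∩ G.district (B ∪ G.ch B)).Nonempty := by
  induction w with
  | nil => exact ⟨_, hx, subset_district _ (Or.inl hb)⟩
  | cons s w ih =>
    rcases hw.mem_or_collider hC (Or.inr hb) with (hmA | hmB) | ⟨hend, hw'⟩
    · exact ih hw.tail hb (subset_district _ (Or.inl hmA)) (Or.inl hmA)
    · exact district_inter_nonempty_of_step s hx hstart hmB
    · exact ih hw.tail hb (mem_district_of_step s hx hstart hend) (Or.inr hw')

theorem district_inter_nonempty_of_isMConnecting {C : Set V} {a b : V} (ha : a ∈ A) (hb : b ∈ B)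
    (hC : (A ∪ B)ᶜ ⊆ C) {w : G.Walk a b} (hw : w.IsMConnecting C) :
    (G.district (A ∪ G.ch A) ∩ G.district (B ∪ G.ch B)).Nonempty :=
  district_inter_nonempty_of_walk hC w hw hb (subset_district _ (Or.inl ha)) (Or.inl ha)

def HasPureColliderMConnectingWalk (G : MixedGraph V) (A B : Set V) : Prop :=
  ∃ a ∈ A, ∃ b ∈ B, ∃ w : G.Walk a b, w.IsPureCollider ∧ w.IsMConnecting (A ∪ B)ᶜ

theorem hasPureColliderMConnectingWalk_or_exists_walk_of_biChain {x v : V}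
    (h : Relation.ReflTransGen G.bi x v) (hv : v ∈ B ∪ G.ch B) :
    G.HasPureColliderMConnectingWalk A B ∨ ∃ b ∈ B, ∃ w : G.Walk x b,
      w.arrowAtStart ∧ w.IsPureCollider ∧ w.IsMConnecting (A ∪ B)ᶜ := by
  induction h using Relation.ReflTransGen.head_induction_on with
  | refl =>
    rcases hv with hvB | ⟨b, hb, hbv⟩
    · exact Or.inr ⟨v, hvB, .nil, trivial, trivial, trivial⟩
    · exact Or.inr ⟨b, hb, .cons (.bwd hbv) .nil, trivial, trivial, trivial⟩
  | @head x y hxy _ ih =>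
    rcases ih with hwit | ⟨b, hb, w, hstart, hp, hc⟩
    · exact Or.inl hwit
    by_cases hyA : y ∈ A
    · exact Or.inl ⟨y, hyA, b, hb, w, hp, hc⟩
    by_cases hyB : y ∈ B
    · exact Or.inr ⟨y, hyB, .cons (.bi hxy) .nil, trivial, trivial, trivial⟩
    have hyC : y ∈ (A ∪ B)ᶜ := by simp [hyA, hyB]
    exact Or.inr ⟨b, hb, .cons (.bi hxy) w, trivial, hp.cons trivial hstart,
      hc.cons trivial hstart hyC⟩

theorem hasPureColliderMConnectingWalk_of_district_inter_nonempty
    (h : (G.district (A ∪ G.ch A) ∩ G.district (B ∪ G.ch B)).Nonempty) :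
    G.HasPureColliderMConnectingWalk A B := by
  obtain ⟨m, ⟨u, hu, hum⟩, ⟨v, hv, hvm⟩⟩ := h
  have : Std.Symm G.bi := ⟨fun _ _ => G.bi_symm⟩
  rcases hasPureColliderMConnectingWalk_or_exists_walk_of_biChain (hum.trans (symm hvm)) hv with
    hwit | ⟨b, hb, w, hstart, hp, hc⟩
  · exact hwit
  rcases hu with huA | ⟨a, ha, hau⟩
  · exact ⟨u, huA, b, hb, w, hp, hc⟩
  by_cases huA : u ∈ A
  · exact ⟨u, huA, b, hb, w, hp, hc⟩
  by_cases huB : u ∈ B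
  · exact ⟨a, ha, u, huB, .cons (.fwd hau) .nil, trivial, trivial⟩
  have huC : u ∈ (A ∪ B)ᶜ := by simp [huA, huB]
  exact ⟨a, ha, b, hb, .cons (.fwd hau) w, hp.cons trivial hstart, hc.cons trivial hstart huC⟩

end DistrictMeet

end MixedGraph

theorem stmt_4_general {V : Type*} (G : MixedGraph V) (A B : Set V) :
    (G.MSep A B (A ∪ B)ᶜ ↔
      ¬ ∃ a ∈ A, ∃ b ∈ B, ∃ w : G.Walk a b, w.IsPureCollider) ∧
    (G.MSep A B (A ∪ B)ᶜ ↔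
      G.district (A ∪ G.ch A) ∩ G.district (B ∪ G.ch B) = ∅) := by
  open MixedGraph in
  have hMSep : G.MSep A B (A ∪ B)ᶜ ↔
      ¬ (G.district (A ∪ G.ch A) ∩ G.district (B ∪ G.ch B)).Nonempty := by
    refine ⟨fun hsep hne => ?_, fun hempty a ha b hb w hw => ?_⟩
    · obtain ⟨a, ha, b, hb, w, -, hw⟩ :=
        hasPureColliderMConnectingWalk_of_district_inter_nonempty hne
      exact hsep a ha b hb w hw
    · exact hempty (district_inter_nonempty_of_isMConnecting ha hb le_rfl hw)
  have hPure : (∃ a ∈ A, ∃ b ∈ B, ∃ w : G.Walk a b, w.IsPureCollider) ↔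
      (G.district (A ∪ G.ch A) ∩ G.district (B ∪ G.ch B)).Nonempty := by
    refine ⟨fun ⟨a, ha, b, hb, w, hw⟩ => ?_, fun hne => ?_⟩
    · exact district_inter_nonempty_of_isMConnecting ha hb (Set.subset_univ _)
        ((Walk.isMConnecting_univ_iff w).2 hw)
    · obtain ⟨a, ha, b, hb, w, hw, -⟩ :=
        hasPureColliderMConnectingWalk_of_district_inter_nonempty hne
      exact ⟨a, ha, b, hb, w, hw⟩
  rw [hPure, ← Set.not_nonempty_iff_eq_empty]
  exact ⟨hMSep, hMSep⟩

/-- TFAE: (i) `A ⊥_m B | V \ (A∪B)`; (ii) no pure-collider path between `A` and `B`;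
(iii) `district(A ∪ ch(A)) ∩ district(B ∪ ch(B)) = ∅`. -/
theorem stmt_4 {V : Type*} (G : MixedGraph V) (A B : Set V) (hAB : Disjoint A B) :
    (G.MSep A B (A ∪ B)ᶜ ↔
      ¬ ∃ a ∈ A, ∃ b ∈ B, ∃ w : G.Walk a b, w.IsPureCollider) ∧
    (G.MSep A B (A ∪ B)ᶜ ↔
      G.district (A ∪ G.ch A) ∩ G.district (B ∪ G.ch B) = ∅) :=
  stmt_4_general G A B
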